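/- arXiv:2302.12086 — 2 statements merged into one kernel-verified Lean document; each statement's English description precedes it below -/
import Mathlib

section
/- In an edge-to-edge rhombus tiling of ℝ², two distinct chains with the same normal vector v cannot cross: they share no common tile (otherwise the common tile would be a degenerate flat rhombus with both edge directions equal to v). -/
open Set Metric

noncomputable section

/-- Points of the euclidean plane. -/
abbrev Pt : Type := EuclideanSpace ℝ (Fin 2)

/-- A rhombus tile in the plane, given by a position (a distinguished vertex)
and its two edge vectors. -/
structure Rhombus where
  pos : Pt
  u : Pt
  v : Pt

namespace Rhombus

/-- A genuine rhombus: linearly independent edge vectors of equal euclidean length. -/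
def IsValid (r : Rhombus) : Prop :=
  LinearIndependent ℝ ![r.u, r.v] ∧ ‖r.u‖ = ‖r.v‖

/-- The support of a rhombus: the closed parallelogram it spans. -/
def support (r : Rhombus) : Set Pt :=
  {x | ∃ s t : ℝ, s ∈ Icc (0 : ℝ) 1 ∧ t ∈ Icc (0 : ℝ) 1 ∧ x = r.pos + s • r.u + t • r.v}

/-- The four vertices of a rhombus. -/
def vertices (r : Rhombus) : Set Pt :=
  {r.pos, r.pos + r.u, r.pos + r.v, r.pos + r.u + r.v}

/-- The four (closed) edges of a rhombus, indexed as in the paper: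
edge `0` from `pos` to `pos + u`, edge `1` from `pos + u` to `pos + u + v`,
edge `2` from `pos + u + v` to `pos + v`, edge `3` from `pos + v` to `pos`. -/
def edge (r : Rhombus) : Fin 4 → Set Pt :=
  ![segment ℝ r.pos (r.pos + r.u),
    segment ℝ (r.pos + r.u) (r.pos + r.u + r.v),
    segment ℝ (r.pos + r.u + r.v) (r.pos + r.v),
    segment ℝ (r.pos + r.v) r.pos]

/-- The set of edges of a rhombus. -/
def edges (r : Rhombus) : Set (Set Pt) := Set.range r.edge

/-- Translation of a rhombus by a vector. -/
def translate (r : Rhombus) (w : Pt) : Rhombus := ⟨r.pos + w, r.u, r.v⟩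

/-- The center of a rhombus. -/
def center (r : Rhombus) : Pt := r.pos + (2⁻¹ : ℝ) • r.u + (2⁻¹ : ℝ) • r.v

/-- Two rhombi are translates of each other (same shape up to translation). -/
def SameShape (r s : Rhombus) : Prop := r.u = s.u ∧ r.v = s.v

/-- `w` is one of the two edge directions of `r` (up to sign). -/
def HasEdgeDir (r : Rhombus) (w : Pt) : Prop :=
  r.u = w ∨ r.u = -w ∨ r.v = w ∨ r.v = -w

end Rhombus

/-- Two rhombi are in edge-to-edge position: they are disjoint, share exactly one
common vertex, or share exactly one full common edge. -/
def EdgeToEdgePair (r s : Rhombus) : Prop :=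
  r.support ∩ s.support = ∅ ∨
  (∃ p, p ∈ r.vertices ∧ p ∈ s.vertices ∧ r.support ∩ s.support = {p}) ∨
  (∃ e, e ∈ r.edges ∧ e ∈ s.edges ∧ r.support ∩ s.support = e)

/-- An edge-to-edge rhombus tiling of the plane: a covering of the plane
without overlap where any two tiles are disjoint, share exactly one vertex or
share a full common edge. -/
def IsTiling (x : Set Rhombus) : Prop :=
  (∀ r ∈ x, r.IsValid) ∧
  (⋃ r ∈ x, r.support) = univ ∧
  ∀ r ∈ x, ∀ s ∈ x, r ≠ s → EdgeToEdgePair r s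

/-- Every tile of `x` is a translate of a shape of the shapeset `T`. -/
def UsesShapes (T : Set Rhombus) (x : Set Rhombus) : Prop :=
  ∀ r ∈ x, ∃ s ∈ T, r.SameShape s

/-- An edge-to-edge tiling whose tiles are translates of shapes of `T`. -/
def IsTilingOn (T : Set Rhombus) (x : Set Rhombus) : Prop :=
  IsTiling x ∧ UsesShapes T x

/-- Support of a patch. -/
def PatchSupport (P : Set Rhombus) : Set Pt := ⋃ r ∈ P, r.support

/-- A patch: a finite nonempty edge-to-edge set of rhombi whose support is
simply connected (no holes). -/
def IsPatch (P : Set Rhombus) : Prop :=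
  P.Finite ∧ P.Nonempty ∧ (∀ r ∈ P, r.IsValid) ∧
  (∀ r ∈ P, ∀ s ∈ P, r ≠ s → EdgeToEdgePair r s) ∧
  SimplyConnectedSpace (PatchSupport P)

/-- Translation of a set of rhombi. -/
def translatePatch (P : Set Rhombus) (w : Pt) : Set Rhombus :=
  (fun r => r.translate w) '' P

/-- The pattern `f` appears in `x`: some translate of `f` is a sub-collection of `x`. -/
def Appears (f : Set Rhombus) (x : Set Rhombus) : Prop :=
  ∃ w : Pt, translatePatch f w ⊆ x

/-- Vertices of a patch. -/
def PatchVertices (P : Set Rhombus) : Set Pt := ⋃ r ∈ P, r.vertices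

/-- The support of `P` contains a disk of radius `ρ` centered at a vertex of `P`. -/
def HasRadius (P : Set Rhombus) (ρ : ℝ) : Prop :=
  ∃ c ∈ PatchVertices P, closedBall c ρ ⊆ PatchSupport P

/-- `P` has minimal radius `ρ`: its support contains a disk of radius `ρ` centered
at one of its vertices, and removing any tile breaks this property. -/
def MinimalRadius (P : Set Rhombus) (ρ : ℝ) : Prop :=
  HasRadius P ρ ∧ ∀ r ∈ P, ¬ HasRadius (P \ {r}) ρ

/-- A rhombus Wang tile: a rhombus with a colour (a natural number) on each edge. -/
structure ColoredRhombus where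
  shape : Rhombus
  color : Fin 4 → ℕ

namespace ColoredRhombus

def translate (t : ColoredRhombus) (w : Pt) : ColoredRhombus :=
  ⟨t.shape.translate w, t.color⟩

/-- Two coloured tiles are equal up to translation. -/
def SameTile (t s : ColoredRhombus) : Prop :=
  t.shape.SameShape s.shape ∧ t.color = s.color

end ColoredRhombus

/-- The colour-erasing operator `π`. -/
def eraseColors (x : Set ColoredRhombus) : Set Rhombus := ColoredRhombus.shape '' x

def translateColoredPatch (P : Set ColoredRhombus) (w : Pt) : Set ColoredRhombus :=
  (fun t => t.translate w) '' P

/-- Any two tiles sharing an edge carry the same colour on the shared edge. -/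
def ColorMatching (x : Set ColoredRhombus) : Prop :=
  ∀ t ∈ x, ∀ s ∈ x, t.shape ≠ s.shape →
    ∀ i j : Fin 4, t.shape.edge i = s.shape.edge j → t.color i = s.color j

/-- No two distinct coloured tiles occupy the same rhombus. -/
def ShapeInjective (x : Set ColoredRhombus) : Prop :=
  ∀ t ∈ x, ∀ s ∈ x, t.shape = s.shape → t = s

/-- A valid tiling by rhombus Wang tiles. -/
def IsColoredTiling (x : Set ColoredRhombus) : Prop :=
  IsTiling (eraseColors x) ∧ ShapeInjective x ∧ ColorMatching x

/-- A valid patch of rhombus Wang tiles. -/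
def IsColoredPatch (x : Set ColoredRhombus) : Prop :=
  IsPatch (eraseColors x) ∧ ShapeInjective x ∧ ColorMatching x

/-- All tiles of `x` are translates of tiles of the tileset `T`. -/
def TilesFrom (T : Set ColoredRhombus) (x : Set ColoredRhombus) : Prop :=
  ∀ t ∈ x, ∃ s ∈ T, t.SameTile s

/-- A subshift on the shapeset `T`: a set of `T`-tilings that is invariant under
translation and closed for the tiling topology (a tiling all of whose finite
patterns appear in tilings of `X` belongs to `X`). -/
def IsSubshift (T : Set Rhombus) (X : Set (Set Rhombus)) : Prop :=
  (∀ x ∈ X, IsTilingOn T x) ∧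
  (∀ x ∈ X, ∀ w : Pt, translatePatch x w ∈ X) ∧
  (∀ x, IsTilingOn T x →
    (∀ P, P ⊆ x → P.Finite → P.Nonempty → ∃ y ∈ X, Appears P y) → x ∈ X)

/-- The shape `r` is uniformly recurrent in the tiling `x`: for some `R > 0`,
every disk of radius `R` contains an occurrence (a translate) of `r`. -/
def UniformlyRecurrentIn (r : Rhombus) (x : Set Rhombus) : Prop :=
  ∃ R : ℝ, 0 < R ∧ ∀ p : Pt, ∃ s ∈ x, s.SameShape r ∧ s.support ⊆ closedBall p R

/-- A shape uniformly recurrent subshift: every shape appearing somewhere in `X`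
is uniformly recurrent in every tiling of `X`. -/
def ShapeUniformlyRecurrent (X : Set (Set Rhombus)) : Prop :=
  ∀ r : Rhombus, (∃ y ∈ X, ∃ s ∈ y, s.SameShape r) →
    ∀ x ∈ X, UniformlyRecurrentIn r x

/-- The restriction of `X` to the tilings using only shapes of `T'`. -/
def restrictShapes (T' : Set Rhombus) (X : Set (Set Rhombus)) : Set (Set Rhombus) :=
  {x ∈ X | UsesShapes T' x}

/-- The subshift on `T` defined by the sequence `F` of forbidden patterns. -/
def SubshiftOfForbidden (T : Set Rhombus) (F : ℕ → Set Rhombus) : Set (Set Rhombus) :=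
  {x | IsTilingOn T x ∧ ∀ n : ℕ, ¬ Appears (F n) x}

/-- A chain of rhombuses of normal vector `w` in the tiling `x`: a bi-infinite
sequence of tiles in which any two consecutive tiles share a full common edge of
direction `w`, the chain crossing each of its tiles from one of its two
`w`-edges to the other one. -/
structure Chain (x : Set Rhombus) (w : Pt) where
  seq : ℤ → Rhombus
  mem : ∀ n : ℤ, seq n ∈ x
  shares : ∀ n : ℤ, ∃ a : Pt,
    segment ℝ a (a + w) ∈ (seq n).edges ∧
    segment ℝ a (a + w) ∈ (seq (n + 1)).edges ∧
    (seq n).support ∩ (seq (n + 1)).support = segment ℝ a (a + w)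
  progress : ∀ n : ℤ,
    (seq (n - 1)).support ∩ (seq n).support ≠ (seq n).support ∩ (seq (n + 1)).support

/-- The set of tiles of a chain. -/
def Chain.tiles {x : Set Rhombus} {w : Pt} (c : Chain x w) : Set Rhombus :=
  Set.range c.seq

/-! Join two tiles of `x` when they share a full edge of direction `v`. A genuine
rhombus has at most two edges of direction `v` (such an edge is parallel to `u` or to `v`, and not
to both), and across a given edge a tile has at most one neighbour, because in the plane three
convex bodies containing a common nondegenerate segment cannot have pairwise disjoint interiors.
Hence every tile has at most two neighbours, and a chain through a tile passes through both of
them: the tiles of a chain are closed under adjacency. As consecutive tiles of a chain are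
adjacent, a chain meeting the tiles of another chain contains all of them. -/

section PlaneGeometry

open Filter Topology

def cross (w z : Pt) : ℝ := w 0 * z 1 - w 1 * z 0

lemma cross_smul_eq (w d d' : Pt) : cross w d' • d = cross w d • d' + cross d d' • w := by
  ext i
  fin_cases i <;> simp [cross] <;> ring

lemma exists_mem_cross_sub_ne_zero {U : Set Pt} (hU : IsOpen U) (hne : U.Nonempty) {w : Pt}
    (hw : w ≠ 0) (a : Pt) : ∃ q ∈ U, cross w (q - a) ≠ 0 := by
  obtain ⟨q, hq⟩ := hne
  obtain hqa | hqa := eq_or_ne (cross w (q - a)) 0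
  swap
  · exact ⟨q, hq, hqa⟩
  let n : Pt := !₂[-w 1, w 0]
  have hn : cross w n ≠ 0 := by
    have hw' : w 0 ≠ 0 ∨ w 1 ≠ 0 := by
      by_contra! h
      exact hw (by ext i; fin_cases i <;> simp [h.1, h.2])
    have : cross w n = w 0 ^ 2 + w 1 ^ 2 := by simp [cross, n]; ring
    rw [this]
    rcases hw' with h | h <;> positivity
  have hnear : ∀ᶠ ε in 𝓝[≠] (0 : ℝ), q + ε • n ∈ U := by
    have : Tendsto (fun ε : ℝ => q + ε • n) (𝓝 0) (𝓝 q) := by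
      simpa using ((tendsto_id (x := 𝓝 (0 : ℝ))).smul_const n).const_add q
    exact nhdsWithin_le_nhds (this (hU.mem_nhds hq))
  obtain ⟨ε, hεU, hε⟩ := (hnear.and self_mem_nhdsWithin).exists
  refine ⟨q + ε • n, hεU, ?_⟩
  have : cross w (q + ε • n - a) = cross w (q - a) + ε * cross w n := by simp [cross]; ring
  rw [this, hqa, zero_add]
  exact mul_ne_zero hε hn

lemma interior_segment_eq_empty (p₁ p₂ : Pt) : interior (segment ℝ p₁ p₂) = ∅ := by
  obtain rfl | hne := eq_or_ne p₁ p₂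
  · rw [segment_same, interior_singleton]
  by_contra h
  obtain ⟨q, hq, hq₀⟩ := exists_mem_cross_sub_ne_zero isOpen_interior
    (nonempty_iff_ne_empty.2 h) (sub_ne_zero.2 hne.symm) p₁
  have hq' := interior_subset hq
  rw [segment_eq_image'] at hq'
  obtain ⟨θ, -, rfl⟩ := hq'
  exact hq₀ (by simp [cross]; ring)

lemma interior_inter_nonempty_of_sameSide {S S' : Set Pt} (hS : Convex ℝ S)
    (hS' : Convex ℝ S') {a b q q' : Pt} (habS : segment ℝ a b ⊆ S) (habS' : segment ℝ a b ⊆ S')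
    (hq : q ∈ interior S) (hq' : q' ∈ interior S')
    (hside : 0 < cross (b - a) (q - a) * cross (b - a) (q' - a)) :
    (interior S ∩ interior S').Nonempty := by
  set w := b - a
  set m : Pt := a + (2⁻¹ : ℝ) • w
  have hmem : ∀ θ ∈ Icc (0 : ℝ) 1, a + θ • w ∈ segment ℝ a b := fun θ hθ => by
    rw [segment_eq_image']; exact ⟨θ, hθ, rfl⟩
  have hcross : ∀ p, cross w (p - m) = cross w (p - a) := fun p => by simp [m, cross]; ring
  set κ := cross w (q - m)
  set κ' := cross w (q' - m)
  have hκ' : κ' ≠ 0 := by rintro h; simp [← hcross, κ', h] at hside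
  set ρ := κ / κ'
  set μ := cross (q - m) (q' - m) / κ'
  have hρ : 0 < ρ := by
    simp only [ρ, κ, κ', hcross]; exact div_pos_iff.2 (mul_pos_iff.1 hside)
  have hdecomp : q - m = ρ • (q' - m) + μ • w := by
    have h := cross_smul_eq w (q - m) (q' - m)
    apply smul_right_injective Pt hκ'
    simp only [ρ, μ, smul_add, smul_smul]
    rw [mul_div_cancel₀ _ hκ', mul_div_cancel₀ _ hκ']
    exact h
  -- For small `t`, `m + t • (q - m)` is also a convex combination of `q'` and a point of `[a, b]`.
  set t := 1 / (2 * ρ + 4 * |μ| + 2)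
  have ht : 0 < t := by positivity
  have htρ : t * ρ < 2⁻¹ ∧ t < 1 ∧ |t * μ| < 4⁻¹ := by
    have : t * (2 * ρ + 4 * |μ| + 2) = 1 := by simp only [t]; field_simp
    rw [abs_mul, abs_of_pos ht]
    refine ⟨?_, ?_, ?_⟩ <;> nlinarith [abs_nonneg μ]
  obtain ⟨htρ, ht1, htμ⟩ := htρ
  refine ⟨m + t • (q - m), ?_, ?_⟩
  · have h := hS.combo_interior_closure_mem_interior hq
      (subset_closure (habS (hmem 2⁻¹ ⟨by norm_num, by norm_num⟩))) ht (by linarith)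
      (by ring : t + (1 - t) = 1)
    convert h using 1
    simp only [m]; module
  · have h1 : 2⁻¹ < 1 - t * ρ := by linarith
    have hθ : 2⁻¹ + t * μ / (1 - t * ρ) ∈ Icc (0 : ℝ) 1 := by
      have h2 : |t * μ / (1 - t * ρ)| ≤ 2⁻¹ := by
        rw [abs_div, abs_of_pos (a := 1 - t * ρ) (by linarith), div_le_iff₀ (by linarith)]
        nlinarith
      obtain ⟨h3, h4⟩ := abs_le.1 h2
      constructor <;> linarith
    have h := hS'.combo_interior_closure_mem_interior hq' (subset_closure (habS' (hmem _ hθ)))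
      (by positivity : 0 < t * ρ) (by linarith) (by ring : t * ρ + (1 - t * ρ) = 1)
    convert h using 1
    have h1s : 1 - t * ρ ≠ 0 := by linarith
    rw [hdecomp]
    simp only [m]
    match_scalars <;> field_simp <;> ring

lemma interior_inter_nonempty_of_segment_subset_three {A B C : Set Pt} (hA : Convex ℝ A)
    (hB : Convex ℝ B) (hC : Convex ℝ C) (hA' : (interior A).Nonempty) (hB' : (interior B).Nonempty)
    (hC' : (interior C).Nonempty) {a b : Pt} (hab : a ≠ b) (habA : segment ℝ a b ⊆ A)
    (habB : segment ℝ a b ⊆ B) (habC : segment ℝ a b ⊆ C) :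
    (interior A ∩ interior B).Nonempty ∨ (interior A ∩ interior C).Nonempty ∨
      (interior B ∩ interior C).Nonempty := by
  have hw : b - a ≠ 0 := sub_ne_zero.2 hab.symm
  obtain ⟨qA, hqA, hA₀⟩ := exists_mem_cross_sub_ne_zero isOpen_interior hA' hw a
  obtain ⟨qB, hqB, hB₀⟩ := exists_mem_cross_sub_ne_zero isOpen_interior hB' hw a
  obtain ⟨qC, hqC, hC₀⟩ := exists_mem_cross_sub_ne_zero isOpen_interior hC' hw a
  rcases hA₀.lt_or_gt with hA₀ | hA₀ <;> rcases hB₀.lt_or_gt with hB₀ | hB₀ <;>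
    rcases hC₀.lt_or_gt with hC₀ | hC₀ <;>
    first
    | exact .inl (interior_inter_nonempty_of_sameSide hA hB habA habB hqA hqB (by nlinarith))
    | exact .inr (.inl
        (interior_inter_nonempty_of_sameSide hA hC habA habC hqA hqC (by nlinarith)))
    | exact .inr (.inr
        (interior_inter_nonempty_of_sameSide hB hC habB habC hqB hqC (by nlinarith)))

end PlaneGeometry

lemma exists_smul_eq_of_segment_eq {E : Type*} [AddCommGroup E] [Module ℝ E] {a w p d : E}
    (h : segment ℝ a (a + w) = segment ℝ p (p + d)) (hd : d ≠ 0) :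
    ∃ c ≠ (0 : ℝ), w = c • d := by
  have ha : a ∈ segment ℝ p (p + d) := h ▸ left_mem_segment ℝ a (a + w)
  have hb : a + w ∈ segment ℝ p (p + d) := h ▸ right_mem_segment ℝ a (a + w)
  rw [segment_eq_image'] at ha hb
  obtain ⟨s, -, hs⟩ := ha
  obtain ⟨t, -, ht⟩ := hb
  simp only [add_sub_cancel_left] at hs ht
  have hw : w = (t - s) • d := by linear_combination (norm := module) hs - ht
  refine ⟨t - s, fun hts => hd ?_, hw⟩
  rw [hts, zero_smul] at hw
  subst hw
  rw [add_zero, segment_same] at h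
  have hp : p ∈ ({a} : Set E) := h ▸ left_mem_segment ℝ p (p + d)
  have hpd : p + d ∈ ({a} : Set E) := h ▸ right_mem_segment ℝ p (p + d)
  rw [mem_singleton_iff] at hp hpd
  simpa [hp] using hpd

lemma eq_or_eq_of_ne_of_or {α : Type*} {x y z a b : α} (hx : x = a ∨ x = b) (hy : y = a ∨ y = b)
    (hz : z = a ∨ z = b) (hxy : x ≠ y) : z = x ∨ z = y := by
  rcases hx with rfl | rfl <;> rcases hy with rfl | rfl <;> rcases hz with rfl | rfl <;> simp_all

namespace Rhombus

lemma convex_support (r : Rhombus) : Convex ℝ r.support := by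
  rintro _ ⟨s, t, hs, ht, rfl⟩ _ ⟨s', t', hs', ht', rfl⟩ α β hα hβ hαβ
  refine ⟨α * s + β * s', α * t + β * t', ⟨?_, ?_⟩, ⟨?_, ?_⟩, ?_⟩
  · nlinarith [hs.1, hs'.1]
  · nlinarith [hs.2, hs'.2]
  · nlinarith [ht.1, ht'.1]
  · nlinarith [ht.2, ht'.2]
  · obtain rfl : β = 1 - α := by linarith
    module

lemma interior_support_nonempty {r : Rhombus} (hr : r.IsValid) :
    (interior r.support).Nonempty := by
  have hpos : r.pos ∈ r.support := ⟨0, 0, by simp, by simp, by simp⟩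
  have hpos_u : r.pos + r.u ∈ r.support := ⟨1, 0, by simp, by simp, by simp⟩
  have hpos_v : r.pos + r.v ∈ r.support := ⟨0, 1, by simp, by simp, by simp⟩
  rw [r.convex_support.interior_nonempty_iff_affineSpan_eq_top,
    AffineSubspace.affineSpan_eq_top_iff_vectorSpan_eq_top_of_nonempty ℝ Pt Pt ⟨_, hpos⟩,
    eq_top_iff, ← hr.1.span_eq_top_of_card_eq_finrank (by simp), Submodule.span_le]
  rintro _ ⟨i, rfl⟩
  fin_cases i
  · simpa using vsub_mem_vectorSpan ℝ hpos_u hpos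
  · simpa using vsub_mem_vectorSpan ℝ hpos_v hpos

lemma IsValid.parallel_of_segment_mem_edges {r : Rhombus} (hr : r.IsValid) {a w : Pt}
    (hE : segment ℝ a (a + w) ∈ r.edges) :
    ((segment ℝ a (a + w) = r.edge 0 ∨ segment ℝ a (a + w) = r.edge 2) ∧
        ∃ c ≠ (0 : ℝ), w = c • r.u) ∨
      ((segment ℝ a (a + w) = r.edge 1 ∨ segment ℝ a (a + w) = r.edge 3) ∧
        ∃ c ≠ (0 : ℝ), w = c • r.v) := by
  have hu : r.u ≠ 0 := by simpa using hr.1.ne_zero 0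
  have hv : r.v ≠ 0 := by simpa using hr.1.ne_zero 1
  obtain ⟨i, hi⟩ := hE
  fin_cases i
  · exact .inl ⟨.inl hi.symm, exists_smul_eq_of_segment_eq hi.symm hu⟩
  · exact .inr ⟨.inl hi.symm, exists_smul_eq_of_segment_eq hi.symm hv⟩
  · refine .inl ⟨.inr hi.symm,
      exists_smul_eq_of_segment_eq (p := r.pos + r.v) (hi.symm.trans ?_) hu⟩
    show segment ℝ (r.pos + r.u + r.v) (r.pos + r.v) = _
    rw [segment_symm, add_right_comm]
  · refine .inr ⟨.inr hi.symm,
      exists_smul_eq_of_segment_eq (p := r.pos) (hi.symm.trans ?_) hv⟩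
    exact segment_symm ℝ _ _

lemma IsValid.ne_zero_of_segment_mem_edges {r : Rhombus} (hr : r.IsValid) {a w : Pt}
    (hE : segment ℝ a (a + w) ∈ r.edges) : w ≠ 0 := by
  rcases hr.parallel_of_segment_mem_edges hE with ⟨-, c, hc, rfl⟩ | ⟨-, c, hc, rfl⟩
  · exact smul_ne_zero hc (by simpa using hr.1.ne_zero 0)
  · exact smul_ne_zero hc (by simpa using hr.1.ne_zero 1)

lemma IsValid.eq_or_eq_of_segment_mem_edges {r : Rhombus} (hr : r.IsValid) {a₁ a₂ a w : Pt}
    (h₁ : segment ℝ a₁ (a₁ + w) ∈ r.edges) (h₂ : segment ℝ a₂ (a₂ + w) ∈ r.edges)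
    (h : segment ℝ a (a + w) ∈ r.edges)
    (h₁₂ : segment ℝ a₁ (a₁ + w) ≠ segment ℝ a₂ (a₂ + w)) :
    segment ℝ a (a + w) = segment ℝ a₁ (a₁ + w) ∨
      segment ℝ a (a + w) = segment ℝ a₂ (a₂ + w) := by
  have not_both {c c' : ℝ} (hc : c ≠ 0) (hu : w = c • r.u) (hv : w = c' • r.v) : False :=
    hc (LinearIndependent.pair_iff.1 hr.1 c (-c')
      (by linear_combination (norm := module) hv - hu)).1
  rcases hr.parallel_of_segment_mem_edges h₁ with ⟨e₁, c₁, hc₁, hw₁⟩ | ⟨e₁, c₁, hc₁, hw₁⟩ <;>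
    rcases hr.parallel_of_segment_mem_edges h₂ with ⟨e₂, c₂, hc₂, hw₂⟩ | ⟨e₂, c₂, hc₂, hw₂⟩ <;>
    rcases hr.parallel_of_segment_mem_edges h with ⟨e, c, hc, hw⟩ | ⟨e, c, hc, hw⟩
  all_goals first
    | exact eq_or_eq_of_ne_of_or e₁ e₂ e h₁₂
    | exact (not_both hc₁ hw₁ hw₂).elim
    | exact (not_both hc₂ hw₂ hw₁).elim
    | exact (not_both hc₁ hw₁ hw).elim
    | exact (not_both hc hw hw₁).elim

end Rhombus

namespace IsTiling

variable {x : Set Rhombus} {r s s' : Rhombus}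

lemma disjoint_interior_support (hx : IsTiling x) (hr : r ∈ x) (hs : s ∈ x) (hrs : r ≠ s) :
    Disjoint (interior r.support) (interior s.support) := by
  rw [disjoint_iff_inter_eq_empty, ← interior_inter]
  rcases hx.2.2 r hr s hs hrs with h | ⟨p, -, -, h⟩ | ⟨e, ⟨i, rfl⟩, -, h⟩ <;> rw [h]
  · exact interior_empty
  · exact interior_singleton p
  · fin_cases i <;> exact interior_segment_eq_empty _ _

lemma eq_of_inter_eq_segment (hx : IsTiling x) (hr : r ∈ x) (hs : s ∈ x) (hs' : s' ∈ x)
    (hrs : r ≠ s) (hrs' : r ≠ s') {a b : Pt} (hab : a ≠ b)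
    (h : r.support ∩ s.support = segment ℝ a b) (h' : r.support ∩ s'.support = segment ℝ a b) :
    s = s' := by
  by_contra hss'
  rcases interior_inter_nonempty_of_segment_subset_three r.convex_support s.convex_support
      s'.convex_support
      (Rhombus.interior_support_nonempty (hx.1 r hr))
      (Rhombus.interior_support_nonempty (hx.1 s hs))
      (Rhombus.interior_support_nonempty (hx.1 s' hs')) hab
      (h ▸ inter_subset_left) (h ▸ inter_subset_right) (h' ▸ inter_subset_right)
    with h | h | h
  · exact not_disjoint_iff_nonempty_inter.2 h (hx.disjoint_interior_support hr hs hrs)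
  · exact not_disjoint_iff_nonempty_inter.2 h (hx.disjoint_interior_support hr hs' hrs')
  · exact not_disjoint_iff_nonempty_inter.2 h (hx.disjoint_interior_support hs hs' hss')

end IsTiling

@[simps]
def sharedEdgeGraph (x : Set Rhombus) (v : Pt) : SimpleGraph Rhombus where
  Adj r s := r ∈ x ∧ s ∈ x ∧ r ≠ s ∧ ∃ a : Pt, segment ℝ a (a + v) ∈ r.edges ∧
    segment ℝ a (a + v) ∈ s.edges ∧ r.support ∩ s.support = segment ℝ a (a + v)
  symm.symm _ _ := fun ⟨hr, hs, hrs, a, har, has, h⟩ =>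
    ⟨hs, hr, hrs.symm, a, has, har, by rw [inter_comm, h]⟩
  loopless.irrefl _ h := h.2.2.1 rfl

lemma sharedEdgeGraph.eq_or_eq_of_adj {x : Set Rhombus} {v : Pt} (hx : IsTiling x)
    {r s s₁ s₂ : Rhombus} (h₁ : (sharedEdgeGraph x v).Adj r s₁)
    (h₂ : (sharedEdgeGraph x v).Adj r s₂) (h₁₂ : s₁ ≠ s₂) (h : (sharedEdgeGraph x v).Adj r s) :
    s = s₁ ∨ s = s₂ := by
  rw [sharedEdgeGraph_adj] at h₁ h₂ h
  obtain ⟨hr, hs₁, hrs₁, a₁, he₁, -, hi₁⟩ := h₁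
  obtain ⟨-, hs₂, hrs₂, a₂, he₂, -, hi₂⟩ := h₂
  obtain ⟨-, hs, hrs, a, he, -, hi⟩ := h
  have hvalid := hx.1 r hr
  have hv := hvalid.ne_zero_of_segment_mem_edges he
  have hne : ∀ b : Pt, b ≠ b + v := fun b => by simpa using hv
  have he₁₂ : segment ℝ a₁ (a₁ + v) ≠ segment ℝ a₂ (a₂ + v) := fun he =>
    h₁₂ (hx.eq_of_inter_eq_segment hr hs₁ hs₂ hrs₁ hrs₂ (hne a₁) hi₁ (he ▸ hi₂))
  rcases hvalid.eq_or_eq_of_segment_mem_edges he₁ he₂ he he₁₂ with he | he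
  · exact .inl (hx.eq_of_inter_eq_segment hr hs hs₁ hrs hrs₁ (hne a) hi (he ▸ hi₁))
  · exact .inr (hx.eq_of_inter_eq_segment hr hs hs₂ hrs hrs₂ (hne a) hi (he ▸ hi₂))

namespace Chain

variable {x : Set Rhombus} {v : Pt}

lemma adj_succ (hx : IsTiling x) (c : Chain x v) (n : ℤ) :
    (sharedEdgeGraph x v).Adj (c.seq n) (c.seq (n + 1)) := by
  obtain ⟨a, ha, ha', h⟩ := c.shares n
  rw [sharedEdgeGraph_adj]
  refine ⟨c.mem n, c.mem (n + 1), fun heq => ?_, a, ha, ha', h⟩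
  rw [← heq, inter_self] at h
  have := Rhombus.interior_support_nonempty (hx.1 _ (c.mem n))
  rw [h, interior_segment_eq_empty] at this
  exact not_nonempty_empty this

lemma mem_tiles_of_adj (hx : IsTiling x) (c : Chain x v) {r s : Rhombus} (hr : r ∈ c.tiles)
    (hrs : (sharedEdgeGraph x v).Adj r s) : s ∈ c.tiles := by
  obtain ⟨n, rfl⟩ := hr
  have hpred : (sharedEdgeGraph x v).Adj (c.seq n) (c.seq (n - 1)) := by
    simpa using (c.adj_succ hx (n - 1)).symm
  have hne : c.seq (n + 1) ≠ c.seq (n - 1) := fun heq => c.progress n (by rw [heq, inter_comm])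
  rcases sharedEdgeGraph.eq_or_eq_of_adj hx (c.adj_succ hx n) hpred hne hrs with rfl | rfl
  exacts [⟨_, rfl⟩, ⟨_, rfl⟩]

lemma tiles_subset_of_inter_nonempty (hx : IsTiling x) (c c' : Chain x v)
    (h : (c.tiles ∩ c'.tiles).Nonempty) : c.tiles ⊆ c'.tiles := by
  obtain ⟨_, ⟨n, rfl⟩, hn⟩ := h
  rintro _ ⟨m, rfl⟩
  induction m using Int.inductionOn' (b := n) with
  | zero => exact hn
  | succ k _ ih => exact c'.mem_tiles_of_adj hx ih (c.adj_succ hx k)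
  | pred k _ ih => exact c'.mem_tiles_of_adj hx ih (by simpa using (c.adj_succ hx (k - 1)).symm)

end Chain

/-- In an edge-to-edge rhombus tiling, two distinct chains with
the same normal vector `v` share no common tile. -/
theorem statement_5 (x : Set Rhombus) (hx : IsTiling x) (v : Pt)
    (c₁ c₂ : Chain x v) (h : c₁.tiles ≠ c₂.tiles) :
    c₁.tiles ∩ c₂.tiles = ∅ := by
  by_contra hne
  have hmeet := nonempty_iff_ne_empty.2 hne
  exact h ((c₁.tiles_subset_of_inter_nonempty hx c₂ hmeet).antisymm
    (c₂.tiles_subset_of_inter_nonempty hx c₁ (inter_comm c₁.tiles _ ▸ hmeet)))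
end
end

section
/- Let X be a non-empty subshift of edge-to-edge rhombus tilings on a finite shapeset 𝒯. Then there exists a subset 𝒯' ⊆ 𝒯 such that the restriction ρ_{𝒯'}(X) := X ∩ X_{𝒯'} is non-empty and there exists a shape r ∈ 𝒯' that is uniformly recurrent in every tiling x ∈ ρ_{𝒯'}(X). -/
open Set Metric

noncomputable section

/-!
Take `T' ⊆ T` minimal with `restrictShapes T' X` non-empty and any shape `r ∈ T'`. If `r` were
not uniformly recurrent in some `x`, then `x` would contain `r`-free disks of every radius.
Recentring `x` on these disks gives tilings of `X` whose patches around the origin range over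
finite sets: area counting bounds the number of tiles meeting a disk, and two meeting tiles
differ in position by one of finitely many vertex offsets, so connectedness of the disk leaves
finitely many possible positions. A diagonal limit of the recentred tilings lies in `X`, since
`X` is closed, and it avoids `r`, contradicting the minimality of `T'`.
-/

open Filter MeasureTheory
open scoped Pointwise ENNReal

namespace Rhombus

theorem SameShape.trans {r s t : Rhombus} (h : r.SameShape s) (h' : s.SameShape t) :
    r.SameShape t :=
  ⟨h.1.trans h'.1, h.2.trans h'.2⟩

theorem sameShape_translate (r : Rhombus) (w : Pt) : (r.translate w).SameShape r := ⟨rfl, rfl⟩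

theorem SameShape.isValid_iff {r s : Rhombus} (h : r.SameShape s) : r.IsValid ↔ s.IsValid := by
  rw [IsValid, IsValid, h.1, h.2]

theorem pos_mem_support (r : Rhombus) : r.pos ∈ r.support :=
  ⟨0, 0, by simp, by simp, by simp⟩

theorem support_translate (r : Rhombus) (w : Pt) :
    (r.translate w).support = w +ᵥ r.support := by
  ext y
  simp only [support, translate, mem_vadd_set, mem_ofPred_eq, vadd_eq_add]
  constructor
  · rintro ⟨s, t, hs, ht, rfl⟩
    exact ⟨_, ⟨s, t, hs, ht, rfl⟩, by abel⟩
  · rintro ⟨_, ⟨s, t, hs, ht, rfl⟩, rfl⟩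
    exact ⟨s, t, hs, ht, by abel⟩

theorem support_eq_vadd_parallelepiped (r : Rhombus) :
    r.support = r.pos +ᵥ parallelepiped ![r.u, r.v] := by
  ext y
  simp only [support, mem_vadd_set, mem_parallelepiped_iff, mem_ofPred_eq, vadd_eq_add,
    Fin.sum_univ_two, Matrix.cons_val_zero, Matrix.cons_val_one, mem_Icc,
    Pi.le_def, Fin.forall_fin_two, Pi.zero_apply, Pi.one_apply]
  constructor
  · rintro ⟨s, t, hs, ht, rfl⟩
    exact ⟨_, ⟨![s, t], ⟨⟨hs.1, ht.1⟩, hs.2, ht.2⟩, rfl⟩, by simp [add_assoc]⟩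
  · rintro ⟨_, ⟨c, ⟨⟨h0, h1⟩, h0', h1'⟩, rfl⟩, rfl⟩
    exact ⟨c 0, c 1, ⟨h0, h0'⟩, ⟨h1, h1'⟩, by rw [add_assoc]⟩

theorem isCompact_support (r : Rhombus) : IsCompact r.support := by
  rw [support_eq_vadd_parallelepiped]
  exact (isCompact_Icc.image (by fun_prop)).vadd _

theorem dist_le_of_mem_support {r : Rhombus} {p q : Pt} (hp : p ∈ r.support)
    (hq : q ∈ r.support) : dist p q ≤ ‖r.u‖ + ‖r.v‖ := by
  obtain ⟨s, t, hs, ht, rfl⟩ := hp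
  obtain ⟨s', t', hs', ht', rfl⟩ := hq
  have hss : |s - s'| ≤ 1 := abs_sub_le_of_le_of_le hs.1 hs.2 hs'.1 hs'.2 |>.trans (by simp)
  have htt : |t - t'| ≤ 1 := abs_sub_le_of_le_of_le ht.1 ht.2 ht'.1 ht'.2 |>.trans (by simp)
  calc dist (r.pos + s • r.u + t • r.v) (r.pos + s' • r.u + t' • r.v)
      = ‖(s - s') • r.u + (t - t') • r.v‖ := by rw [dist_eq_norm]; congr 1; module
    _ ≤ |s - s'| * ‖r.u‖ + |t - t'| * ‖r.v‖ := by
        grw [norm_add_le, norm_smul, norm_smul, Real.norm_eq_abs, Real.norm_eq_abs]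
    _ ≤ ‖r.u‖ + ‖r.v‖ := by
        gcongr <;> apply mul_le_of_le_one_left (norm_nonneg _) <;> assumption

theorem SameShape.volume_support_eq {r s : Rhombus} (h : r.SameShape s) :
    volume r.support = volume s.support := by
  rw [support_eq_vadd_parallelepiped, support_eq_vadd_parallelepiped, measure_vadd,
    measure_vadd, h.1, h.2]

theorem IsValid.volume_support_pos {r : Rhombus} (h : r.IsValid) : 0 < volume r.support := by
  have hcard : Fintype.card (Fin 2) = Module.finrank ℝ Pt := by simp
  let b := basisOfLinearIndependentOfCardEqFinrank h.1 hcard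
  rw [support_eq_vadd_parallelepiped, measure_vadd]
  have hb : parallelepiped ![r.u, r.v] = parallelepiped b := by
    rw [coe_basisOfLinearIndependentOfCardEqFinrank]
  rw [hb]
  exact Measure.measure_pos_of_nonempty_interior _ b.parallelepiped.interior_nonempty

def vertexOffsets (r : Rhombus) : Set Pt := {0, r.u, r.v, r.u + r.v}

theorem vertexOffsets_finite (r : Rhombus) : r.vertexOffsets.Finite := by
  simp [vertexOffsets]

theorem SameShape.vertexOffsets_eq {r s : Rhombus} (h : r.SameShape s) :
    r.vertexOffsets = s.vertexOffsets := by
  rw [vertexOffsets, vertexOffsets, h.1, h.2]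

theorem sub_pos_mem_vertexOffsets {r : Rhombus} {p : Pt} (hp : p ∈ r.vertices) :
    p - r.pos ∈ r.vertexOffsets := by
  rcases hp with rfl | rfl | rfl | rfl <;> simp [vertexOffsets, add_assoc]

theorem exists_edge_eq_segment (r : Rhombus) (i : Fin 4) :
    ∃ a ∈ r.vertices, ∃ b ∈ r.vertices, r.edge i = segment ℝ a b := by
  fin_cases i <;> simp [edge, vertices]

end Rhombus

theorem eq_or_eq_of_segment_eq {E : Type*} [AddCommGroup E] [Module ℝ E] {a b c d : E}
    (h : segment ℝ a b = segment ℝ c d) : c = a ∨ c = b := by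
  by_cases hab : a = b
  · subst hab
    have hc : c ∈ segment ℝ a a := h ▸ left_mem_segment ℝ c d
    exact Or.inl (by simpa using hc)
  set f := AffineMap.lineMap (k := ℝ) a b
  have hf := AffineMap.lineMap_injective ℝ hab
  have hab' := segment_eq_image_lineMap ℝ a b
  obtain ⟨s, -, rfl⟩ : c ∈ f '' Icc 0 1 := hab' ▸ h ▸ left_mem_segment ℝ c d
  obtain ⟨t, -, rfl⟩ : d ∈ f '' Icc 0 1 := hab' ▸ h ▸ right_mem_segment ℝ (f s) d
  rw [hab', ← image_segment, hf.image_injective.eq_iff, segment_eq_uIcc, uIcc,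
    Icc_eq_Icc_iff zero_le_one] at h
  rcases le_total s t with hst | hst
  · left; simp [f, ← (min_eq_left hst) ▸ h.1]
  · right; simp [f, ← (max_eq_left hst) ▸ h.2]

theorem volume_segment (a b : Pt) : volume (segment ℝ a b) = 0 := by
  have hline : (ℝ ∙ (b - a)) ≠ ⊤ := by
    intro h
    have := finrank_span_le_card (R := ℝ) ({b - a} : Set Pt)
    rw [h, finrank_top] at this
    simp at this
  refine measure_mono_null (t := a +ᵥ ((ℝ ∙ (b - a) : Submodule ℝ Pt) : Set Pt)) ?_ ?_
  · rw [segment_eq_image']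
    rintro _ ⟨t, -, rfl⟩
    exact ⟨t • (b - a), Submodule.smul_mem _ t (Submodule.mem_span_singleton_self _), rfl⟩
  · rw [measure_vadd]
    exact Measure.addHaar_submodule _ _ hline

namespace EdgeToEdgePair

theorem volume_inter_eq_zero {r s : Rhombus} (h : EdgeToEdgePair r s) :
    volume (r.support ∩ s.support) = 0 := by
  rcases h with h | ⟨p, -, -, h⟩ | ⟨e, ⟨i, rfl⟩, -, h⟩
  · simp [h]
  · simp [h]
  · obtain ⟨a, -, b, -, hab⟩ := r.exists_edge_eq_segment i
    rw [h, hab, volume_segment]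

theorem exists_mem_vertices {r s : Rhombus} (h : EdgeToEdgePair r s)
    (hrs : (r.support ∩ s.support).Nonempty) : ∃ p ∈ r.vertices, p ∈ s.vertices := by
  rcases h with h | ⟨p, hpr, hps, -⟩ | ⟨e, ⟨i, hi⟩, ⟨j, hj⟩, -⟩
  · simp [h] at hrs
  · exact ⟨p, hpr, hps⟩
  · obtain ⟨a, ha, b, hb, hab⟩ := r.exists_edge_eq_segment i
    obtain ⟨c, hc, d, -, hcd⟩ := s.exists_edge_eq_segment j
    rcases eq_or_eq_of_segment_eq (hab.symm.trans (hi.trans (hj.symm.trans hcd))) with rfl | rfl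
    · exact ⟨c, ha, hc⟩
    · exact ⟨c, hb, hc⟩

end EdgeToEdgePair

theorem Set.Finite.nsmul_set {α : Type*} [AddMonoid α] {s : Set α} (hs : s.Finite) (n : ℕ) :
    (n • s).Finite := by
  classical
  simpa using (n • hs.toFinset).finite_toSet

theorem Monotone.exists_succ_eq_of_subset_finite {α : Type*} {A : ℕ → Set α}
    (hA : Monotone A) {W : Set α} (hW : W.Finite) (hAW : ∀ n, A n ⊆ W) :
    ∃ n ≤ W.ncard, A (n + 1) = A n := by
  by_contra! h
  have hgrow : ∀ n ≤ W.ncard + 1, n ≤ (A n).ncard := by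
    intro n
    induction n with
    | zero => simp
    | succ n ih =>
      intro hn
      have hlt : (A n).ncard < (A (n + 1)).ncard :=
        ncard_lt_ncard ((hA n.le_succ).ssubset_of_ne (h n (by omega)).symm) (hW.subset (hAW _))
      have := ih (by omega)
      omega
  have := ncard_le_ncard (hAW (W.ncard + 1)) hW
  have := hgrow _ le_rfl
  omega

def nearTiles (x : Set Rhombus) (K : Set Pt) : Set Rhombus :=
  {t ∈ x | (t.support ∩ K).Nonempty}

def tileDisplacements (T : Set Rhombus) : Set Pt :=
  insert 0 (⋃ s₁ ∈ T, ⋃ s₂ ∈ T, s₁.vertexOffsets - s₂.vertexOffsets)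

namespace IsTiling

variable {x T : Set Rhombus}

theorem card_mul_le_volume (hx : IsTiling x) {F : Finset Rhombus} (hFx : ↑F ⊆ x)
    {a : ℝ≥0∞} (ha : ∀ t ∈ F, a ≤ volume t.support) {B : Set Pt}
    (hB : ∀ t ∈ F, t.support ⊆ B) : F.card * a ≤ volume B :=
  calc (F.card : ℝ≥0∞) * a ≤ ∑ t ∈ F, volume t.support := by
        rw [← nsmul_eq_mul]
        exact Finset.card_nsmul_le_sum _ _ _ ha
    _ = volume (⋃ t ∈ F, t.support) := by
        refine (measure_biUnion_finset₀ (fun r hr s hs hrs => ?_) fun t _ =>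
          t.isCompact_support.isClosed.measurableSet.nullMeasurableSet).symm
        exact (hx.2.2 r (hFx hr) s (hFx hs) hrs).volume_inter_eq_zero
    _ ≤ volume B := measure_mono (iUnion₂_subset hB)

theorem pos_sub_mem_tileDisplacements (hx : IsTiling x) (hxT : UsesShapes T x)
    {a b : Rhombus} (ha : a ∈ x) (hb : b ∈ x) (hab : (a.support ∩ b.support).Nonempty) :
    b.pos - a.pos ∈ tileDisplacements T := by
  rcases eq_or_ne a b with rfl | hne
  · simp [tileDisplacements]
  obtain ⟨p, hpa, hpb⟩ := (hx.2.2 a ha b hb hne).exists_mem_vertices hab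
  obtain ⟨s₁, hs₁, has₁⟩ := hxT a ha
  obtain ⟨s₂, hs₂, hbs₂⟩ := hxT b hb
  refine mem_insert_of_mem _ (mem_biUnion hs₁ (mem_biUnion hs₂ ?_))
  rw [← has₁.vertexOffsets_eq, ← hbs₂.vertexOffsets_eq]
  exact ⟨p - a.pos, Rhombus.sub_pos_mem_vertexOffsets hpa, p - b.pos,
    Rhombus.sub_pos_mem_vertexOffsets hpb, sub_sub_sub_cancel_left _ _ _⟩

theorem nearTiles_subset_of_forall_mem (hx : IsTiling x) {K : Set Pt} (hK : IsPreconnected K)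
    (hfin : (nearTiles x K).Finite) {C : Set Rhombus} (hC : C ⊆ nearTiles x K)
    (hCne : C.Nonempty)
    (hclosed : ∀ a ∈ C, ∀ b ∈ nearTiles x K,
      (a.support ∩ b.support).Nonempty → b ∈ C) :
    nearTiles x K ⊆ C := by
  intro b hb
  by_contra hbC
  obtain ⟨a, haC⟩ := hCne
  have hclosed_union : ∀ S ⊆ nearTiles x K, IsClosed (⋃ t ∈ S, t.support) := fun S hS =>
    (hfin.subset hS).isClosed_biUnion fun t _ => t.isCompact_support.isClosed
  have hcover : K ⊆ (⋃ t ∈ C, t.support) ∪ ⋃ t ∈ nearTiles x K \ C, t.support := by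
    intro q hq
    obtain ⟨t, ht, hqt⟩ := mem_iUnion₂.mp (hx.2.1 ▸ mem_univ q)
    by_cases htC : t ∈ C
    · exact Or.inl (mem_biUnion htC hqt)
    · exact Or.inr (mem_biUnion ⟨⟨ht, q, hqt, hq⟩, htC⟩ hqt)
  obtain ⟨qa, hqa, hqaK⟩ := (hC haC).2
  obtain ⟨qb, hqb, hqbK⟩ := hb.2
  obtain ⟨q, -, hqC, hqC'⟩ := isPreconnected_closed_iff.mp hK _ _ (hclosed_union C hC)
    (hclosed_union _ sdiff_subset) hcover ⟨qa, hqaK, mem_biUnion haC hqa⟩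
    ⟨qb, hqbK, mem_biUnion ⟨hb, hbC⟩ hqb⟩
  obtain ⟨t, htC, hqt⟩ := mem_iUnion₂.mp hqC
  obtain ⟨t', ht', hqt'⟩ := mem_iUnion₂.mp hqC'
  exact ht'.2 (hclosed t htC t' ht'.1 ⟨q, hqt, hqt'⟩)

theorem pos_sub_mem_nsmul_tileDisplacements (hx : IsTiling x) (hxT : UsesShapes T x)
    {K : Set Pt} (hK : IsPreconnected K) (hfin : (nearTiles x K).Finite) {t₀ t : Rhombus}
    (ht₀ : t₀ ∈ nearTiles x K) (ht : t ∈ nearTiles x K) :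
    t.pos - t₀.pos ∈ (nearTiles x K).ncard • tileDisplacements T := by
  have h0 : (0 : Pt) ∈ tileDisplacements T := mem_insert _ _
  set A : ℕ → Set Rhombus :=
    fun n => {w ∈ nearTiles x K | w.pos - t₀.pos ∈ n • tileDisplacements T}
  have hA : Monotone A := fun m n hmn w hw => ⟨hw.1, nsmul_subset_nsmul_right h0 hmn hw.2⟩
  obtain ⟨n, hnW, hn⟩ := hA.exists_succ_eq_of_subset_finite hfin fun n => sep_subset _ _
  -- once `A` stabilises, `A n` is closed under meeting tiles, so it contains all of `nearTiles x K`
  have hWA : nearTiles x K ⊆ A n := by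
    refine hx.nearTiles_subset_of_forall_mem hK hfin (sep_subset _ _)
      ⟨t₀, ht₀, by simpa using zero_mem_nsmul h0⟩ fun a ha b hb hab => hn ▸ ⟨hb, ?_⟩
    rw [succ_nsmul]
    exact ⟨_, ha.2, _, hx.pos_sub_mem_tileDisplacements hxT ha.1.1 hb.1 hab,
      sub_add_sub_cancel' _ _ _⟩
  exact nsmul_subset_nsmul_right h0 hnW (hWA ht).2

end IsTiling

section FiniteShapeset

variable {T : Set Rhombus}

theorem exists_dist_le_of_mem_support (hT : T.Finite) : ∃ D : ℝ, ∀ x, UsesShapes T x →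
    ∀ t ∈ x, ∀ p ∈ t.support, ∀ q ∈ t.support, dist p q ≤ D := by
  obtain ⟨D, hD⟩ := (hT.image fun s => ‖s.u‖ + ‖s.v‖).bddAbove
  refine ⟨D, fun x hxT t ht p hp q hq => ?_⟩
  obtain ⟨s, hs, hts⟩ := hxT t ht
  calc dist p q ≤ ‖t.u‖ + ‖t.v‖ := Rhombus.dist_le_of_mem_support hp hq
    _ = ‖s.u‖ + ‖s.v‖ := by rw [hts.1, hts.2]
    _ ≤ D := hD (mem_image_of_mem _ hs)

theorem exists_le_volume_support (hT : T.Finite) : ∃ a : ℝ≥0∞, 0 < a ∧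
    ∀ x, IsTiling x → UsesShapes T x → ∀ t ∈ x, a ≤ volume t.support := by
  classical
  refine ⟨(hT.toFinset.filter Rhombus.IsValid).inf fun s => volume s.support,
    (Finset.lt_inf_iff ENNReal.zero_lt_top).mpr fun s hs =>
      (Finset.mem_filter.mp hs).2.volume_support_pos, fun x hx hxT t ht => ?_⟩
  obtain ⟨s, hs, hts⟩ := hxT t ht
  rw [hts.volume_support_eq]
  exact Finset.inf_le <|
    Finset.mem_filter.mpr ⟨hT.mem_toFinset.mpr hs, hts.isValid_iff.mp (hx.1 t ht)⟩

theorem tileDisplacements_finite (hT : T.Finite) : (tileDisplacements T).Finite :=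
  (hT.biUnion fun s₁ _ => hT.biUnion fun s₂ _ =>
    s₁.vertexOffsets_finite.sub s₂.vertexOffsets_finite).insert 0

theorem finite_setOf_pos_mem_sameShape {S : Set Pt} (hS : S.Finite) (hT : T.Finite) :
    {t : Rhombus | t.pos ∈ S ∧ ∃ s ∈ T, t.SameShape s}.Finite := by
  refine ((hS.prod hT).image fun ps : Pt × Rhombus =>
    (⟨ps.1, ps.2.u, ps.2.v⟩ : Rhombus)).subset ?_
  rintro ⟨p, u, v⟩ ⟨hp, s, hs, rfl, rfl⟩
  exact ⟨(p, s), ⟨hp, hs⟩, rfl⟩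

theorem exists_ncard_nearTiles_le (hT : T.Finite) (c : Pt) (ρ : ℝ) :
    ∃ N : ℕ, ∀ x, IsTiling x → UsesShapes T x →
      (nearTiles x (closedBall c ρ)).Finite ∧ (nearTiles x (closedBall c ρ)).ncard ≤ N := by
  obtain ⟨D, hD⟩ := exists_dist_le_of_mem_support hT
  obtain ⟨a, ha, haT⟩ := exists_le_volume_support hT
  have hV : volume (closedBall c (ρ + D)) ≠ ∞ := measure_closedBall_lt_top.ne
  obtain ⟨N, hN⟩ := ENNReal.exists_nat_gt (ENNReal.div_lt_top hV ha.ne').ne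
  refine ⟨N, fun x hx hxT => ?_⟩
  have hcard : ∀ F : Finset Rhombus, ↑F ⊆ nearTiles x (closedBall c ρ) → F.card ≤ N := by
    intro F hF
    have hvol := hx.card_mul_le_volume (hF.trans (sep_subset _ _))
      (fun t ht => haT x hx hxT t (hF ht).1) (B := closedBall c (ρ + D)) fun t ht p hp => by
        obtain ⟨q, hq, hqc⟩ := (hF ht).2
        rw [mem_closedBall] at hqc ⊢
        linarith [dist_triangle p q c, hD x hxT t (hF ht).1 p hp q hq]
    have := ((ENNReal.le_div_iff_mul_le (Or.inl ha.ne') (Or.inr hV)).mpr hvol).trans hN.le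
    exact_mod_cast this
  have hfin : (nearTiles x (closedBall c ρ)).Finite := by
    by_contra hinf
    obtain ⟨F, hF, hFcard⟩ := Set.Infinite.exists_subset_card_eq hinf (N + 1)
    have := hcard F hF
    omega
  refine ⟨hfin, ?_⟩
  rw [ncard_eq_toFinset_card _ hfin]
  exact hcard hfin.toFinset (by simp)

theorem exists_finite_setOf_nearTiles (hT : T.Finite) (c : Pt) (ρ : ℝ) :
    ∃ S : Set (Set Rhombus), S.Finite ∧ ∀ x, IsTilingOn T x →
      ∀ t₀ ∈ nearTiles x (closedBall c ρ), t₀.pos = c →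
        nearTiles x (closedBall c ρ) ∈ S := by
  obtain ⟨N, hN⟩ := exists_ncard_nearTiles_le hT c ρ
  have hS := ((tileDisplacements_finite hT).nsmul_set N).add (finite_singleton c)
  refine ⟨{F | F ⊆ {t | t.pos ∈ N • tileDisplacements T + {c} ∧
      ∃ s ∈ T, t.SameShape s}},
    (finite_setOf_pos_mem_sameShape hS hT).finite_subsets, fun x hx t₀ ht₀ hc t ht => ?_⟩
  obtain ⟨hfin, hcard⟩ := hN x hx.1 hx.2
  have hpos := nsmul_subset_nsmul_right (mem_insert _ _) hcard <|
    hx.1.pos_sub_mem_nsmul_tileDisplacements hx.2 (convex_closedBall c ρ).isPreconnected hfin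
      ht₀ ht
  exact ⟨⟨_, hpos, c, rfl, by rw [← hc]; exact sub_add_cancel _ _⟩, hx.2 t ht.1⟩

end FiniteShapeset

theorem translatePatch_zero (P : Set Rhombus) : translatePatch P 0 = P := by
  simp [translatePatch, Rhombus.translate]

theorem exists_frequently_forall_eq {β : Type*} (Q : ℕ → ℕ → β)
    (hQ : ∀ k, ∃ S : Set β, S.Finite ∧ ∀ n, Q n k ∈ S) :
    ∃ P : ℕ → β, ∀ K, ∃ᶠ n in atTop, ∀ k ≤ K, Q n k = P k := by
  let U := Ultrafilter.of (atTop : Filter ℕ)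
  have hP : ∀ k, ∃ b, ∀ᶠ n in (U : Filter ℕ), Q n k = b := by
    intro k
    obtain ⟨S, hS, hQS⟩ := hQ k
    obtain ⟨b, -, hb⟩ := (Ultrafilter.eventually_exists_mem_iff (P := fun b n => Q n k = b)
      hS).mp (Eventually.of_forall fun n => ⟨Q n k, hQS n, rfl⟩)
    exact ⟨b, hb⟩
  choose P hP using hP
  refine ⟨P, fun K => ?_⟩
  have : ∀ᶠ n in (U : Filter ℕ), ∀ k ∈ Iic K, Q n k = P k :=
    (eventually_all_finite (finite_Iic K)).mpr fun k _ => hP k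
  exact this.frequently.filter_mono (Ultrafilter.of_le _)

namespace IsSubshift

variable {T : Set Rhombus} {X : Set (Set Rhombus)}

theorem exists_mem_of_finite_nearTiles (hX : IsSubshift T X) {y : ℕ → Set Rhombus}
    (hy : ∀ n, y n ∈ X) (hfin : ∀ k : ℕ, ∃ S : Set (Set Rhombus), S.Finite ∧
      ∀ n, nearTiles (y n) (closedBall 0 k) ∈ S) :
    ∃ z ∈ X, ∀ t ∈ z, ∃ k : ℕ,
      ∃ᶠ n in atTop, t ∈ nearTiles (y n) (closedBall 0 k) := by
  obtain ⟨P, hP⟩ := exists_frequently_forall_eq _ hfin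
  have hsub : ∀ F ⊆ ⋃ k, P k, F.Finite → ∃ n, F ⊆ y n := by
    intro F hF hFfin
    obtain ⟨I, hI, hFI⟩ := finite_subset_iUnion hFfin hF
    obtain ⟨K, hK⟩ := hI.bddAbove
    obtain ⟨n, hn⟩ := (hP K).exists
    refine ⟨n, hFI.trans (iUnion₂_subset fun k hk => ?_)⟩
    rw [← hn k (hK hk)]
    exact sep_subset _ _
  have hpair : ∀ a ∈ ⋃ k, P k, ∀ b ∈ ⋃ k, P k, ∃ n, a ∈ y n ∧ b ∈ y n :=
    fun a ha b hb => (hsub {a, b} (insert_subset ha (singleton_subset_iff.mpr hb)) (toFinite _)).imp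
      fun n hn => ⟨hn (mem_insert a _), hn (mem_insert_of_mem a rfl)⟩
  refine ⟨⋃ k, P k, hX.2.2 _ ⟨⟨fun t ht => ?_, eq_univ_of_forall fun q => ?_,
    fun a ha b hb hab => ?_⟩, fun t ht => ?_⟩ fun F hF hFfin _ => ?_, fun t ht => ?_⟩
  · obtain ⟨n, hn, -⟩ := hpair t ht t ht
    exact (hX.1 _ (hy n)).1.1 t hn
  · obtain ⟨K, hK⟩ := exists_nat_ge ‖q‖
    obtain ⟨n, hn⟩ := (hP K).exists
    obtain ⟨t, ht, hqt⟩ := mem_iUnion₂.mp ((hX.1 _ (hy n)).1.2.1 ▸ mem_univ q)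
    have htP : t ∈ P K := hn K le_rfl ▸ ⟨ht, q, hqt, by simpa using hK⟩
    exact mem_biUnion (mem_iUnion_of_mem K htP) hqt
  · obtain ⟨n, han, hbn⟩ := hpair a ha b hb
    exact (hX.1 _ (hy n)).1.2.2 a han b hbn hab
  · obtain ⟨n, hn, -⟩ := hpair t ht t ht
    exact (hX.1 _ (hy n)).2 t hn
  · obtain ⟨n, hn⟩ := hsub F hF hFfin
    exact ⟨y n, hy n, 0, (translatePatch_zero F).symm ▸ hn⟩
  · obtain ⟨k, hk⟩ := mem_iUnion.mp ht
    exact ⟨k, (hP k).mono fun n hn => hn k le_rfl ▸ hk⟩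

theorem restrictShapes_diff_singleton_nonempty {T' : Set Rhombus} (hT : T.Finite)
    (hX : IsSubshift T X) {x : Set Rhombus} (hx : x ∈ restrictShapes T' X) {r : Rhombus}
    (hr : ¬ UniformlyRecurrentIn r x) : (restrictShapes (T' \ {r}) X).Nonempty := by
  obtain ⟨hxX, hxT'⟩ := hx
  have hxT := hX.1 x hxX
  simp only [UniformlyRecurrentIn, not_exists, not_and, not_forall] at hr
  choose p hp using fun n : ℕ => hr (n + 1) n.cast_add_one_pos
  choose t ht hpt using fun n => mem_iUnion₂.mp (hxT.1.2.1 ▸ mem_univ (p n))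
  set y := fun n => translatePatch x (-(t n).pos)
  have hy : ∀ n, y n ∈ X := fun n => hX.2.1 x hxX _
  obtain ⟨z, hzX, hz⟩ := hX.exists_mem_of_finite_nearTiles hy fun k => by
    obtain ⟨S, hS, hyS⟩ := exists_finite_setOf_nearTiles hT 0 k
    refine ⟨S, hS, fun n => hyS (y n) (hX.1 _ (hy n)) ((t n).translate (-(t n).pos)) ?_
      (add_neg_cancel (t n).pos)⟩
    exact ⟨mem_image_of_mem _ (ht n), _, Rhombus.pos_mem_support _, by simp [Rhombus.translate]⟩
  obtain ⟨D, hD⟩ := exists_dist_le_of_mem_support hT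
  refine ⟨z, hzX, fun w hw => ?_⟩
  obtain ⟨k, hk⟩ := hz w hw
  obtain ⟨n, hn, ⟨s, hs, rfl⟩, q, hq, hqk⟩ := hk.forall_exists_of_atTop ⌈k + 2 * D⌉₊
  obtain ⟨s', hs', hss'⟩ := hxT' s hs
  refine ⟨s', ⟨hs', fun hs'r => hp n s hs (hs'r ▸ hss') fun a ha => ?_⟩,
    (Rhombus.sameShape_translate _ _).trans hss'⟩
  rw [Rhombus.support_translate, mem_vadd_set] at hq
  obtain ⟨q₀, hq₀, rfl⟩ := hq
  have hq₀n : dist q₀ (t n).pos ≤ k := by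
    simpa [dist_eq_norm, sub_eq_add_neg, add_comm] using hqk
  have hkn : (k : ℝ) + 2 * D ≤ n := (Nat.le_ceil _).trans (by exact_mod_cast hn)
  rw [mem_closedBall]
  linarith [dist_triangle4 a q₀ (t n).pos (p n), hD x hxT.2 s hs a ha q₀ hq₀,
    hD x hxT.2 (t n) (ht n) _ (Rhombus.pos_mem_support _) _ (hpt n)]

end IsSubshift

theorem statement_11_general (T : Set Rhombus) (hTfin : T.Finite)
    (X : Set (Set Rhombus)) (hsub : IsSubshift T X) (hne : X.Nonempty) :
    ∃ T' : Set Rhombus, T' ⊆ T ∧ (restrictShapes T' X).Nonempty ∧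
      ∃ r ∈ T', ∀ x ∈ restrictShapes T' X, UniformlyRecurrentIn r x := by
  have hcand : {T' | T' ⊆ T ∧ (restrictShapes T' X).Nonempty}.Finite :=
    hTfin.finite_subsets.subset fun _ h => h.1
  obtain ⟨T', ⟨hT'T, x, hxX, hxT'⟩, hmin⟩ :=
    hcand.exists_minimal ⟨T, subset_rfl, hne.imp fun x hx => ⟨hx, (hsub.1 x hx).2⟩⟩
  obtain ⟨t, ht, -⟩ := mem_iUnion₂.mp ((hsub.1 x hxX).1.2.1 ▸ mem_univ (0 : Pt))
  obtain ⟨r, hr, -⟩ := hxT' t ht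
  refine ⟨T', hT'T, ⟨x, hxX, hxT'⟩, r, hr, fun y hy => ?_⟩
  by_contra hry
  have hT'r := hmin ⟨sdiff_subset.trans hT'T,
    hsub.restrictShapes_diff_singleton_nonempty hTfin hy hry⟩ sdiff_subset
  exact (hT'r hr).2 rfl

/-- Every non-empty subshift `X` on a finite shapeset `T`
admits a subset `T' ⊆ T` such that the restriction of `X` to `T'` is non-empty
and has a shape `r ∈ T'` uniformly recurrent in all of its tilings. -/
theorem statement_11 (T : Set Rhombus) (hTfin : T.Finite)
    (hTval : ∀ s ∈ T, s.IsValid)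
    (X : Set (Set Rhombus)) (hsub : IsSubshift T X) (hne : X.Nonempty) :
    ∃ T' : Set Rhombus, T' ⊆ T ∧ (restrictShapes T' X).Nonempty ∧
      ∃ r ∈ T', ∀ x ∈ restrictShapes T' X, UniformlyRecurrentIn r x :=
  statement_11_general T hTfin X hsub hne
end
end
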